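/- arXiv:2111.10869 — 2 statements merged into one kernel-verified Lean document; each statement's English description precedes it below -/
import Mathlib

section
/- Let X : H ← G and Y : G ← K be composable groupoid correspondences between étale groupoids. Then there is a canonical homeomorphism (X ∘_G Y)/K ≅ X ∘_G (Y/K), where X ∘_G Y is the orbit space of the diagonal G-action g·(x,y) = (x·g⁻¹, g·y) on X ×_{s,G⁰,r} Y. -/
open Topology

/-- An étale topological groupoid, given by its arrow space `A` and object space `O`. -/
structure EtaleGroupoid (A O : Type) [TopologicalSpace A] [TopologicalSpace O] where
  r : A → O
  s : A → O
  unit : O → A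
  mul : A → A → A
  inv : A → A
  r_unit : ∀ o, r (unit o) = o
  s_unit : ∀ o, s (unit o) = o
  r_mul : ∀ g h, s g = r h → r (mul g h) = r g
  s_mul : ∀ g h, s g = r h → s (mul g h) = s h
  mul_assoc : ∀ g h k, s g = r h → s h = r k → mul (mul g h) k = mul g (mul h k)
  unit_mul : ∀ g, mul (unit (r g)) g = g
  mul_unit : ∀ g, mul g (unit (s g)) = g
  r_inv : ∀ g, r (inv g) = s g
  s_inv : ∀ g, s (inv g) = r g
  mul_inv : ∀ g, mul g (inv g) = unit (r g)
  inv_mul : ∀ g, mul (inv g) g = unit (s g)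
  etale_r : IsLocalHomeomorph r
  etale_s : IsLocalHomeomorph s
  continuous_mul : Continuous fun p : { p : A × A // s p.1 = r p.2 } => mul p.1.1 p.1.2
  continuous_inv : Continuous inv

variable {A O : Type} [TopologicalSpace A] [TopologicalSpace O]

/-- A right action of an étale groupoid on a topological space `X`. -/
structure RightAction (G : EtaleGroupoid A O) (X : Type) [TopologicalSpace X] where
  anchor : X → O
  act : X → A → X
  continuous_anchor : Continuous anchor
  continuous_act :
    Continuous fun p : { p : X × A // anchor p.1 = G.r p.2 } => act p.1.1 p.1.2
  anchor_act : ∀ x g, anchor x = G.r g → anchor (act x g) = G.s g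
  act_mul : ∀ x g h, anchor x = G.r g → G.s g = G.r h →
    act (act x g) h = act x (G.mul g h)
  act_unit : ∀ x, act x (G.unit (anchor x)) = x

/-- A left action of an étale groupoid on a topological space `X`. -/
structure LeftAction (G : EtaleGroupoid A O) (X : Type) [TopologicalSpace X] where
  anchor : X → O
  act : A → X → X
  continuous_anchor : Continuous anchor
  continuous_act :
    Continuous fun p : { p : A × X // G.s p.1 = anchor p.2 } => act p.1.1 p.1.2
  anchor_act : ∀ g x, G.s g = anchor x → anchor (act g x) = G.r g
  mul_act : ∀ g h x, G.s g = G.r h → G.s h = anchor x →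
    act g (act h x) = act (G.mul g h) x
  unit_act : ∀ x, act (G.unit (anchor x)) x = x

namespace RightAction

variable {G : EtaleGroupoid A O} {X : Type} [TopologicalSpace X]

/-- The map `(x, g) ↦ (x·g, x)` on the fibre product `X ×_{s,G⁰,r} G`. -/
def pairMap (ρ : RightAction G X) :
    { p : X × A // ρ.anchor p.1 = G.r p.2 } → X × X :=
  fun p => (ρ.act p.1.1 p.1.2, p.1.1)

/-- The action is *basic* if `pairMap` is a homeomorphism onto its image. -/
def IsBasic (ρ : RightAction G X) : Prop := Topology.IsEmbedding ρ.pairMap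

/-- The action is *free* if `pairMap` is injective. -/
def IsFree (ρ : RightAction G X) : Prop := Function.Injective ρ.pairMap

/-- The action is *proper* if `pairMap` is a proper map. -/
def IsProper (ρ : RightAction G X) : Prop := IsProperMap ρ.pairMap

/-- Two points are orbit equivalent if one is a translate of the other. -/
def OrbitRel (ρ : RightAction G X) (x y : X) : Prop :=
  ∃ g, ρ.anchor x = G.r g ∧ y = ρ.act x g

/-- The orbit space `X/G`, with the quotient topology. -/
def OrbitSpace (ρ : RightAction G X) : Type := Quot ρ.OrbitRel

instance (ρ : RightAction G X) : TopologicalSpace ρ.OrbitSpace :=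
  instTopologicalSpaceQuot

/-- The orbit space projection `p : X → X/G`. -/
def orbitMap (ρ : RightAction G X) : X → ρ.OrbitSpace := Quot.mk _

end RightAction

variable {AH OH : Type} [TopologicalSpace AH] [TopologicalSpace OH]

/-- A groupoid correspondence `X : H ← G`: commuting left `H`- and right `G`-actions
such that the right anchor map is a local homeomorphism and the right action is free
and proper. -/
structure Correspondence (H : EtaleGroupoid AH OH) (G : EtaleGroupoid A O)
    (X : Type) [TopologicalSpace X] where
  left : LeftAction H X
  right : RightAction G X
  sInv_left : ∀ h x, H.s h = left.anchor x →
    right.anchor (left.act h x) = right.anchor x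
  rInv_right : ∀ x g, right.anchor x = G.r g →
    left.anchor (right.act x g) = left.anchor x
  comm : ∀ h x g, H.s h = left.anchor x → right.anchor x = G.r g →
    left.act h (right.act x g) = right.act (left.act h x) g
  etale_s : IsLocalHomeomorph right.anchor
  free : right.IsFree
  proper : right.IsProper

namespace Correspondence

variable {H : EtaleGroupoid AH OH} {G : EtaleGroupoid A O}
  {X : Type} [TopologicalSpace X]

/-- The map `r_* : X/G → H⁰` induced by the left anchor map. -/
def rStar (C : Correspondence H G X) : C.right.OrbitSpace → OH :=
  Quot.lift C.left.anchor (by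
    rintro x y ⟨g, hg, rfl⟩
    exact (C.rInv_right x g hg).symm)

end Correspondence
section Composition

variable {A O AH OH AK OK : Type} [TopologicalSpace A] [TopologicalSpace O]
  [TopologicalSpace AH] [TopologicalSpace OH]
  [TopologicalSpace AK] [TopologicalSpace OK]
  {H : EtaleGroupoid AH OH} {G : EtaleGroupoid A O} {K : EtaleGroupoid AK OK}
  {X Y : Type} [TopologicalSpace X] [TopologicalSpace Y]

namespace Correspondence

/-- The orbit relation of the diagonal `G`-action `g·(x,y) = (x·g⁻¹, g·y)` on the
fibre product `X ×_{s,G⁰,r} Y` of correspondences `X : H ← G` and `Y : G ← K`. -/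
def diagRel (CX : Correspondence H G X) (CY : Correspondence G K Y) :
    { p : X × Y // CX.right.anchor p.1 = CY.left.anchor p.2 } →
      { p : X × Y // CX.right.anchor p.1 = CY.left.anchor p.2 } → Prop :=
  fun z z' => ∃ g, ∃ hg : CX.right.anchor z.1.1 = G.s g,
    z' = ⟨(CX.right.act z.1.1 (G.inv g), CY.left.act g z.1.2), by
      rw [CX.right.anchor_act _ _ (hg.trans (G.r_inv g).symm), G.s_inv,
        CY.left.anchor_act _ _ (hg.symm.trans z.2)]⟩

/-- The underlying space `X ∘_G Y` of the composite of two groupoid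
correspondences: the orbit space of the diagonal `G`-action. -/
def Comp (CX : Correspondence H G X) (CY : Correspondence G K Y) : Type :=
  Quot (diagRel CX CY)

instance (CX : Correspondence H G X) (CY : Correspondence G K Y) :
    TopologicalSpace (Comp CX CY) := instTopologicalSpaceQuot

/-- The class `[x,y] ∈ X ∘_G Y` of a pair `(x,y)` with `s x = r y`. -/
def compMk (CX : Correspondence H G X) (CY : Correspondence G K Y)
    (z : { p : X × Y // CX.right.anchor p.1 = CY.left.anchor p.2 }) :
    Comp CX CY :=
  Quot.mk _ z

/-- The right anchor map `s[x,y] = s y` of the composite correspondence. -/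
def compAnchorS (CX : Correspondence H G X) (CY : Correspondence G K Y) :
    Comp CX CY → OK :=
  Quot.lift (fun z => CY.right.anchor z.1.2) (by
    rintro z z' ⟨g, hg, rfl⟩
    exact (CY.sInv_left g z.1.2 (hg.symm.trans z.2)).symm)

/-- The left anchor map `r[x,y] = r x` of the composite correspondence. -/
def compAnchorR (CX : Correspondence H G X) (CY : Correspondence G K Y) :
    Comp CX CY → OH :=
  Quot.lift (fun z => CX.left.anchor z.1.1) (by
    rintro z z' ⟨g, hg, rfl⟩
    exact (CX.rInv_right z.1.1 (G.inv g) (hg.trans (G.r_inv g).symm)).symm)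

/-- The orbit relation of the right `K`-action `[x,y]·k = [x, y·k]` on the
composite `X ∘_G Y`, expressed via representatives. -/
def compRightRel (CX : Correspondence H G X) (CY : Correspondence G K Y) :
    Comp CX CY → Comp CX CY → Prop :=
  fun q q' => ∃ z : { p : X × Y // CX.right.anchor p.1 = CY.left.anchor p.2 },
    ∃ k, ∃ hk : CY.right.anchor z.1.2 = K.r k,
      q = compMk CX CY z ∧
      q' = compMk CX CY ⟨(z.1.1, CY.right.act z.1.2 k), by
        rw [CY.rInv_right _ _ hk]; exact z.2⟩

end Correspondence

end Composition

section AuxLemmas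

variable {A O : Type} [TopologicalSpace A] [TopologicalSpace O]

namespace EtaleGroupoid

variable (G : EtaleGroupoid A O)

theorem inv_unique {g c : A} (h1 : G.s g = G.r c)
    (h2 : G.mul g c = G.unit (G.r g)) : c = G.inv g := by
  have h3 : c = G.mul (G.unit (G.s g)) c := by
    rw [h1, G.unit_mul]
  rw [h3, ← G.inv_mul g, G.mul_assoc _ _ _ (G.s_inv g) h1, h2, ← G.s_inv g, G.mul_unit]

theorem inv_unit (o : O) : G.inv (G.unit o) = G.unit o := by
  refine (G.inv_unique ?_ ?_).symm
  · rw [G.s_unit, G.r_unit]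
  · have h := G.unit_mul (G.unit o)
    rw [G.r_unit] at h
    rw [G.r_unit, h]

theorem inv_inv (g : A) : G.inv (G.inv g) = g := by
  refine (G.inv_unique (G.s_inv g) ?_).symm
  rw [G.inv_mul, G.r_inv]

theorem mul_inv_rev {a b : A} (h : G.s a = G.r b) :
    G.inv (G.mul a b) = G.mul (G.inv b) (G.inv a) := by
  have hba : G.s (G.inv b) = G.r (G.inv a) := by
    rw [G.s_inv, G.r_inv]; exact h.symm
  refine (G.inv_unique ?_ ?_).symm
  · rw [G.s_mul a b h, G.r_mul (G.inv b) (G.inv a) hba, G.r_inv]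
  · rw [G.mul_assoc a b _ h (by rw [G.r_mul _ _ hba, G.r_inv]),
      ← G.mul_assoc b (G.inv b) (G.inv a) (G.r_inv b).symm hba,
      G.mul_inv b, ← h, ← G.r_inv a, G.unit_mul, G.mul_inv, G.r_mul a b h]

end EtaleGroupoid

namespace RightAction

variable {G : EtaleGroupoid A O} {X : Type} [TopologicalSpace X] (ρ : RightAction G X)

theorem act_inv_cancel {x : X} {g : A} (h : ρ.anchor x = G.r g) :
    ρ.act (ρ.act x g) (G.inv g) = x := by
  rw [ρ.act_mul x g (G.inv g) h (G.r_inv g).symm, G.mul_inv, ← h, ρ.act_unit]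

theorem act_inv_cancel' {x : X} {g : A} (h : ρ.anchor x = G.s g) :
    ρ.act (ρ.act x (G.inv g)) g = x := by
  rw [ρ.act_mul x (G.inv g) g (by rw [G.r_inv]; exact h) (G.s_inv g), G.inv_mul,
    ← h, ρ.act_unit]

theorem orbitRel_equivalence : Equivalence ρ.OrbitRel := by
  constructor
  · exact fun x => ⟨G.unit (ρ.anchor x), (G.r_unit _).symm, (ρ.act_unit x).symm⟩
  · rintro x y ⟨g, hg, rfl⟩
    exact ⟨G.inv g, by rw [ρ.anchor_act x g hg, G.r_inv], (ρ.act_inv_cancel hg).symm⟩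
  · rintro x y z ⟨g, hg, rfl⟩ ⟨k, hk, rfl⟩
    have hsg : G.s g = G.r k := by rw [← ρ.anchor_act x g hg]; exact hk
    exact ⟨G.mul g k, by rw [G.r_mul g k hsg]; exact hg, ρ.act_mul x g k hg hsg⟩

end RightAction

theorem isOpenMap_pullback_fst {X : Type} [TopologicalSpace X]
    {f : X → O} (hf : Continuous f) {r : A → O} (hr : IsLocalHomeomorph r) :
    IsOpenMap (fun p : { p : X × A // f p.1 = r p.2 } => p.1.1) := by
  intro W hW
  rw [isOpen_induced_iff] at hW
  obtain ⟨V, hV, rfl⟩ := hW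
  rw [isOpen_iff_forall_mem_open]
  rintro x ⟨⟨⟨x', g⟩, hfg⟩, hmem, rfl⟩
  obtain ⟨e, hge, hre⟩ := hr g
  refine ⟨(f ⁻¹' e.target) ∩ (fun u => ((u, e.symm (f u)) : X × A)) ⁻¹' V, ?_, ?_, ?_⟩
  · rintro u ⟨huN, huV⟩
    refine ⟨⟨(u, e.symm (f u)), ?_⟩, huV, rfl⟩
    rw [hre]
    exact (e.right_inv huN).symm
  · exact ContinuousOn.isOpen_inter_preimage
      (continuousOn_id.prodMk (e.continuousOn_symm.comp hf.continuousOn fun u hu => hu))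
      (e.open_target.preimage hf) hV
  · refine ⟨?_, ?_⟩
    · show f x' ∈ e.target
      rw [hfg, hre]; exact e.map_source hge
    · show ((x', e.symm (f x')) : X × A) ∈ V
      have hsy : e.symm (f x') = g := by rw [hfg, hre]; exact e.left_inv hge
      rw [hsy]; exact hmem

namespace RightAction

variable {G : EtaleGroupoid A O} {X : Type} [TopologicalSpace X] (ρ : RightAction G X)

theorem isOpenMap_orbitMap : IsOpenMap ρ.orbitMap := by
  intro U hU
  apply (isQuotientMap_quot_mk (r := ρ.OrbitRel)).isOpen_preimage.mp
  have key : Quot.mk ρ.OrbitRel ⁻¹' (ρ.orbitMap '' U) =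
      (fun p : { p : X × A // ρ.anchor p.1 = G.r p.2 } => p.1.1) ''
        ((fun p : { p : X × A // ρ.anchor p.1 = G.r p.2 } =>
          ρ.act p.1.1 p.1.2) ⁻¹' U) := by
    ext x
    constructor
    · intro hx
      rw [Set.mem_preimage] at hx
      obtain ⟨u, hu, hux⟩ := hx
      have hrel : ρ.OrbitRel u x :=
        (Equivalence.eqvGen_iff ρ.orbitRel_equivalence).mp (Quot.eq.mp hux)
      obtain ⟨g, hg, rfl⟩ := hrel
      refine ⟨⟨(ρ.act u g, G.inv g), by rw [ρ.anchor_act _ _ hg, G.r_inv]⟩, ?_, rfl⟩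
      show ρ.act (ρ.act u g) (G.inv g) ∈ U
      rw [ρ.act_inv_cancel hg]; exact hu
    · rintro ⟨⟨⟨x', g⟩, hc⟩, hmem, rfl⟩
      refine Set.mem_preimage.mpr ⟨ρ.act x' g, hmem, ?_⟩
      exact Quot.sound ⟨G.inv g, by rw [ρ.anchor_act _ _ hc, G.r_inv],
        (ρ.act_inv_cancel hc).symm⟩
  refine (congrArg IsOpen key).mpr ?_
  exact isOpenMap_pullback_fst ρ.continuous_anchor G.etale_r _
    (hU.preimage ρ.continuous_act)

end RightAction

end AuxLemmas

section Statement11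

variable {A O AH OH AK OK : Type} [TopologicalSpace A] [TopologicalSpace O]
  [TopologicalSpace AH] [TopologicalSpace OH]
  [TopologicalSpace AK] [TopologicalSpace OK]
  {H : EtaleGroupoid AH OH} {G : EtaleGroupoid A O} {K : EtaleGroupoid AK OK}
  {X Y : Type} [TopologicalSpace X] [TopologicalSpace Y]

open Correspondence

/-- The orbit relation of the diagonal `G`-action on `X ×_{s,G⁰,r_*} (Y/K)`,
expressed via representatives; its quotient is `X ∘_G (Y/K)`. -/
def diagRelQuot (CX : Correspondence H G X) (CY : Correspondence G K Y) :
    { p : X × CY.right.OrbitSpace // CX.right.anchor p.1 = CY.rStar p.2 } →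
      { p : X × CY.right.OrbitSpace // CX.right.anchor p.1 = CY.rStar p.2 } → Prop :=
  fun w w' => ∃ (x : X) (y : Y) (h1 : CX.right.anchor x = CY.left.anchor y)
    (g : A) (hg : CX.right.anchor x = G.s g),
      w = ⟨(x, CY.right.orbitMap y), h1⟩ ∧
      w' = ⟨(CX.right.act x (G.inv g), CY.right.orbitMap (CY.left.act g y)), by
        rw [CX.right.anchor_act _ _ (hg.trans (G.r_inv g).symm), G.s_inv]
        exact (CY.left.anchor_act _ _ (hg.symm.trans h1)).symm⟩

section MainAux

variable (CX : Correspondence H G X) (CY : Correspondence G K Y)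

/-- The canonical map `X ×_{G⁰} Y → X ×_{G⁰} (Y/K)`. -/
def psiMap : { p : X × Y // CX.right.anchor p.1 = CY.left.anchor p.2 } →
    { p : X × CY.right.OrbitSpace // CX.right.anchor p.1 = CY.rStar p.2 } :=
  fun z => ⟨(z.1.1, CY.right.orbitMap z.1.2), z.2⟩

theorem psiMap_continuous : Continuous (psiMap CX CY) :=
  Continuous.subtype_mk
    ((continuous_fst.comp continuous_subtype_val).prodMk
      (continuous_quot_mk.comp (continuous_snd.comp continuous_subtype_val))) _

theorem psiMap_surjective : Function.Surjective (psiMap CX CY) := by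
  rintro ⟨⟨x, q⟩, h⟩
  obtain ⟨y, rfl⟩ := Quot.exists_rep q
  exact ⟨⟨(x, y), h⟩, rfl⟩

theorem psiMap_isOpenMap : IsOpenMap (psiMap CX CY) := by
  intro W hW
  rw [isOpen_induced_iff] at hW
  obtain ⟨V, hV, rfl⟩ := hW
  have key : psiMap CX CY '' (Subtype.val ⁻¹' V) =
      Subtype.val ⁻¹' (Prod.map id CY.right.orbitMap '' V) := by
    ext w
    constructor
    · rintro ⟨z, hz, rfl⟩
      exact ⟨z.1, hz, rfl⟩
    · rintro ⟨⟨x, y⟩, hxy, hval⟩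
      refine ⟨⟨(x, y), ?_⟩, hxy, ?_⟩
      · have hw := w.2
        rw [← hval] at hw
        exact hw
      · exact Subtype.ext hval
  rw [key]
  exact (IsOpenMap.id.prodMap CY.right.isOpenMap_orbitMap V hV).preimage
    continuous_subtype_val

theorem diagRelQuot_refl (w : { p : X × CY.right.OrbitSpace //
    CX.right.anchor p.1 = CY.rStar p.2 }) : diagRelQuot CX CY w w := by
  obtain ⟨⟨x, q⟩, h⟩ := w
  obtain ⟨y, rfl⟩ := Quot.exists_rep q
  have h' : CX.right.anchor x = CY.left.anchor y := h
  refine ⟨x, y, h, G.unit (CX.right.anchor x), (G.s_unit _).symm, rfl, ?_⟩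
  refine Subtype.ext (Prod.ext ?_ ?_)
  · show x = CX.right.act x (G.inv (G.unit (CX.right.anchor x)))
    rw [G.inv_unit, CX.right.act_unit]
  · show Quot.mk _ y = CY.right.orbitMap (CY.left.act (G.unit (CX.right.anchor x)) y)
    rw [h', CY.left.unit_act]
    rfl

theorem diagRelQuot_symm {w w'} (hrel : diagRelQuot CX CY w w') :
    diagRelQuot CX CY w' w := by
  obtain ⟨x, y, h1, g, hg, rfl, rfl⟩ := hrel
  have hg' : CX.right.anchor (CX.right.act x (G.inv g)) = G.s (G.inv g) :=
    CX.right.anchor_act _ _ (by rw [G.r_inv]; exact hg)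
  refine ⟨CX.right.act x (G.inv g), CY.left.act g y, by
      rw [CX.right.anchor_act _ _ (hg.trans (G.r_inv g).symm), G.s_inv]
      exact (CY.left.anchor_act _ _ (hg.symm.trans h1)).symm,
    G.inv g, hg', rfl, ?_⟩
  refine Subtype.ext (Prod.ext ?_ ?_)
  · show x = CX.right.act (CX.right.act x (G.inv g)) (G.inv (G.inv g))
    rw [G.inv_inv]
    exact (CX.right.act_inv_cancel' hg).symm
  · show CY.right.orbitMap y =
      CY.right.orbitMap (CY.left.act (G.inv g) (CY.left.act g y))
    have hyy : CY.left.act (G.inv g) (CY.left.act g y) = y := by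
      rw [CY.left.mul_act _ _ _ (G.s_inv g) (hg.symm.trans h1), G.inv_mul,
        hg.symm.trans h1, CY.left.unit_act]
    rw [hyy]

theorem diagRelQuot_trans {w w' w''} (hr1 : diagRelQuot CX CY w w')
    (hr2 : diagRelQuot CX CY w' w'') : diagRelQuot CX CY w w'' := by
  obtain ⟨x, y, hxy, g, hg, rfl, rfl⟩ := hr1
  obtain ⟨x', y', hxy', g', hg', e1, rfl⟩ := hr2
  have e1' := congrArg Subtype.val e1
  have hx' : CX.right.act x (G.inv g) = x' := congrArg Prod.fst e1'
  have hq : CY.right.orbitMap (CY.left.act g y) = CY.right.orbitMap y' :=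
    congrArg Prod.snd e1'
  have hrel : CY.right.OrbitRel (CY.left.act g y) y' :=
    (Equivalence.eqvGen_iff CY.right.orbitRel_equivalence).mp (Quot.eq.mp hq)
  obtain ⟨k, hk, hy'⟩ := hrel
  have hxg : CX.right.anchor (CX.right.act x (G.inv g)) = G.r g := by
    rw [CX.right.anchor_act _ _ (by rw [G.r_inv]; exact hg), G.s_inv]
  have hsg' : G.s g' = G.r g := by rw [← hg', ← hx']; exact hxg
  have hg'' : CX.right.anchor x = G.s (G.mul g' g) := by
    rw [G.s_mul g' g hsg']; exact hg
  have hay : G.s g = CY.left.anchor y := hg.symm.trans hxy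
  refine ⟨x, y, hxy, G.mul g' g, hg'', rfl, ?_⟩
  refine Subtype.ext (Prod.ext ?_ ?_)
  · show CX.right.act x' (G.inv g') = CX.right.act x (G.inv (G.mul g' g))
    rw [← hx', G.mul_inv_rev hsg',
      ← CX.right.act_mul x (G.inv g) (G.inv g') (by rw [G.r_inv]; exact hg)
        (by rw [G.s_inv, G.r_inv]; exact hsg'.symm)]
  · show CY.right.orbitMap (CY.left.act g' y') =
      CY.right.orbitMap (CY.left.act (G.mul g' g) y)
    rw [hy', CY.comm g' (CY.left.act g y) k
        (by rw [CY.left.anchor_act g y hay]; exact hsg') hk,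
      CY.left.mul_act g' g y hsg' hay]
    have hky : CY.right.anchor y = K.r k := by
      rw [← CY.sInv_left g y hay]; exact hk
    have h2 : CY.right.anchor (CY.left.act (G.mul g' g) y) = K.r k := by
      rw [CY.sInv_left _ _ (by rw [G.s_mul g' g hsg']; exact hay)]; exact hky
    exact (Quot.sound ⟨k, h2, rfl⟩).symm

theorem diagRelQuot_equivalence : Equivalence (diagRelQuot CX CY) :=
  ⟨diagRelQuot_refl CX CY, diagRelQuot_symm CX CY, diagRelQuot_trans CX CY⟩

theorem rel_of_psi {z z' : { p : X × Y // CX.right.anchor p.1 = CY.left.anchor p.2 }}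
    (hrel : diagRelQuot CX CY (psiMap CX CY z) (psiMap CX CY z')) :
    compRightRel CX CY (Quot.mk _ z) (Quot.mk _ z') := by
  obtain ⟨x, y, h1, g, hg, e1, e2⟩ := hrel
  have e1' := congrArg Subtype.val e1
  have hx : z.1.1 = x := congrArg Prod.fst e1'
  have hy : CY.right.orbitMap z.1.2 = CY.right.orbitMap y := congrArg Prod.snd e1'
  have e2' := congrArg Subtype.val e2
  have hx' : z'.1.1 = CX.right.act x (G.inv g) := congrArg Prod.fst e2'
  have hy' : CY.right.orbitMap z'.1.2 = CY.right.orbitMap (CY.left.act g y) :=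
    congrArg Prod.snd e2'
  obtain ⟨k₁, hk₁, hz2⟩ : CY.right.OrbitRel y z.1.2 :=
    (Equivalence.eqvGen_iff CY.right.orbitRel_equivalence).mp (Quot.eq.mp hy.symm)
  obtain ⟨k₂, hk₂, hz2'⟩ : CY.right.OrbitRel (CY.left.act g y) z'.1.2 :=
    (Equivalence.eqvGen_iff CY.right.orbitRel_equivalence).mp (Quot.eq.mp hy'.symm)
  have hgz : CX.right.anchor z.1.1 = G.s g := by rw [hx]; exact hg
  have hay : G.s g = CY.left.anchor y := hg.symm.trans h1
  have hky : CY.right.anchor (CY.left.act g y) = CY.right.anchor y :=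
    CY.sInv_left g y hay
  have hrk : K.r k₂ = K.r k₁ := by rw [← hk₂, hky, hk₁]
  have hkk : K.mul k₁ (K.mul (K.inv k₁) k₂) = k₂ := by
    rw [← K.mul_assoc k₁ (K.inv k₁) k₂ (K.r_inv k₁).symm (by rw [K.s_inv, hrk]),
      K.mul_inv, ← hrk, K.unit_mul]
  refine ⟨⟨(CX.right.act z.1.1 (G.inv g), CY.left.act g z.1.2), by
      rw [CX.right.anchor_act _ _ (hgz.trans (G.r_inv g).symm), G.s_inv,
        CY.left.anchor_act _ _ (hgz.symm.trans z.2)]⟩,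
    K.mul (K.inv k₁) k₂, ?_, ?_, ?_⟩
  · show CY.right.anchor (CY.left.act g z.1.2) = K.r (K.mul (K.inv k₁) k₂)
    rw [CY.sInv_left g z.1.2 (hgz.symm.trans z.2), hz2,
      CY.right.anchor_act y k₁ hk₁,
      K.r_mul (K.inv k₁) k₂ (by rw [K.s_inv, hrk]), K.r_inv]
  · exact Quot.sound ⟨g, hgz, rfl⟩
  · show compMk CX CY z' = _
    refine congrArg (compMk CX CY) (Subtype.ext (Prod.ext ?_ ?_)).symm
    · show CX.right.act z.1.1 (G.inv g) = z'.1.1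
      rw [hx]; exact hx'.symm
    · show CY.right.act (CY.left.act g z.1.2) (K.mul (K.inv k₁) k₂) = z'.1.2
      rw [hz2, CY.comm g y k₁ hay hk₁,
        CY.right.act_mul (CY.left.act g y) k₁ (K.mul (K.inv k₁) k₂)
          (hky.trans hk₁)
          (by rw [K.r_mul _ _ (by rw [K.s_inv, hrk]), K.r_inv]),
        hkk]
      exact hz2'.symm

/-- The canonical map `(X ∘_G Y)/K → X ∘_G (Y/K)`. -/
def compToQuot : Quot (compRightRel CX CY) → Quot (diagRelQuot CX CY) :=
  Quot.lift
    (Quot.lift (fun z => Quot.mk (diagRelQuot CX CY) (psiMap CX CY z))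
      (by
        rintro z z' ⟨g, hg, rfl⟩
        exact Quot.sound ⟨z.1.1, z.1.2, z.2, g, hg, rfl, rfl⟩))
    (by
      rintro q q' ⟨w, k, hk, rfl, rfl⟩
      exact congrArg (Quot.mk _)
        (Subtype.ext (Prod.ext rfl (Quot.sound ⟨k, hk, rfl⟩))))

theorem compToQuot_continuous : Continuous (compToQuot CX CY) :=
  continuous_quot_lift _ (continuous_quot_lift _
    (continuous_quot_mk.comp (psiMap_continuous CX CY)))

theorem compToQuot_surjective : Function.Surjective (compToQuot CX CY) := by
  intro q
  obtain ⟨w, rfl⟩ := Quot.exists_rep q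
  obtain ⟨z, rfl⟩ := psiMap_surjective CX CY w
  exact ⟨Quot.mk _ (Quot.mk _ z), rfl⟩

theorem compToQuot_injective : Function.Injective (compToQuot CX CY) := by
  intro a b
  induction a using Quot.ind with
  | _ qa =>
  induction b using Quot.ind with
  | _ qb =>
  induction qa using Quot.ind with
  | _ z =>
  induction qb using Quot.ind with
  | _ z' =>
  intro h
  have hrel : diagRelQuot CX CY (psiMap CX CY z) (psiMap CX CY z') :=
    (Equivalence.eqvGen_iff (diagRelQuot_equivalence CX CY)).mp (Quot.eq.mp h)
  exact Quot.sound (rel_of_psi CX CY hrel)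

theorem compToQuot_isOpenMap : IsOpenMap (compToQuot CX CY) := by
  intro U hU
  rw [← (isQuotientMap_quot_mk (r := diagRelQuot CX CY)).isOpen_preimage]
  have key : Quot.mk (diagRelQuot CX CY) ⁻¹' (compToQuot CX CY '' U) =
      psiMap CX CY ''
        ((fun z => Quot.mk (compRightRel CX CY) (Quot.mk (diagRel CX CY) z)) ⁻¹' U) := by
    ext w
    constructor
    · intro hw
      obtain ⟨z, rfl⟩ := psiMap_surjective CX CY w
      rw [Set.mem_preimage] at hw
      obtain ⟨u, hu, huw⟩ := hw
      have hu' : u = Quot.mk _ (Quot.mk _ z) := compToQuot_injective CX CY huw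
      refine ⟨z, ?_, rfl⟩
      rw [Set.mem_preimage]; rw [hu'] at hu; exact hu
    · rintro ⟨z, hz, rfl⟩
      exact ⟨Quot.mk _ (Quot.mk _ z), hz, rfl⟩
  rw [key]
  exact psiMap_isOpenMap CX CY _
    (hU.preimage ((continuous_quot_mk (r := compRightRel CX CY)).comp
      (continuous_quot_mk (r := diagRel CX CY))))

end MainAux

/-- `(X ∘_G Y)/K ≅ X ∘_G (Y/K)` for composable groupoid correspondences
`X : H ← G` and `Y : G ← K`, induced by `[[x,y]] ↦ [x, p_Y y]`. -/
theorem commute_two_orbit_spaces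
    (CX : Correspondence H G X) (CY : Correspondence G K Y) :
    ∃ e : Quot (compRightRel CX CY) ≃ₜ Quot (diagRelQuot CX CY),
      ∀ z : { p : X × Y // CX.right.anchor p.1 = CY.left.anchor p.2 },
        e (Quot.mk _ (compMk CX CY z)) =
          Quot.mk _ ⟨(z.1.1, CY.right.orbitMap z.1.2), z.2⟩ :=
  ⟨Equiv.toHomeomorphOfContinuousOpen
      (Equiv.ofBijective (compToQuot CX CY)
        ⟨compToQuot_injective CX CY, compToQuot_surjective CX CY⟩)
      (compToQuot_continuous CX CY) (compToQuot_isOpenMap CX CY),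
    fun _ => rfl⟩

end Statement11
end

section
/- Let G and H be discrete groups and X : H ← G a groupoid correspondence. Then X is a discrete set with commuting free right G-action and left H-action, and choosing a section of X → X/G =: A yields a G-equivariant bijection X ≅ A × G under which the left H-action takes the form h·(x,g) = (π_h(x), φ(h,x)·g), where π is an H-action on A and φ : H × A → G is a 1-cocycle, i.e., φ(h₁h₂, x) = φ(h₁, π_{h₂}(x))·φ(h₂, x) for all h₁, h₂ ∈ H and x ∈ A. -/
/-!
The right anchor is a local homeomorphism onto a point, so `X` is discrete. A free action of `Γ`
together with a representative of every orbit identifies `X` with `X/Γ × Γ`, equivariantly. Since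
the `Λ`-action commutes with the `Γ`-action, it is determined by where it sends the
representatives `(a, 1)`, say to `(π h a, φ h a)`; the action law `(h₁h₂)·x = h₁·(h₂·x)`, read
off in the two coordinates, is exactly the statement that `π` is an action and `φ` a cocycle.
-/

open Topology

variable {A O : Type} [TopologicalSpace A] [TopologicalSpace O]

variable {AH OH : Type} [TopologicalSpace AH] [TopologicalSpace OH]

section Statement19

/-- Any map from a discrete space to `Unit` is a local homeomorphism. -/
theorem discrete_to_unit_isLocalHomeomorph {X : Type} [TopologicalSpace X]
    [DiscreteTopology X] (f : X → Unit) : IsLocalHomeomorph f := by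
  intro x
  refine ⟨⟨⟨⟨f, fun _ => x, {x}, Set.univ, ?_, ?_, ?_, ?_⟩, ?_, ?_⟩, ?_, ?_⟩, rfl, ?_⟩
  · intro a _; trivial
  · intro a _; exact rfl
  · rintro a rfl; rfl
  · intro a _; exact Subsingleton.elim _ _
  · exact (continuous_of_discreteTopology).continuousOn
  · exact continuous_const.continuousOn
  · exact isOpen_discrete _
  · exact isOpen_univ
  · rfl

/-- A discrete group, viewed as an étale groupoid with a single object. -/
def groupGroupoid (Γ : Type) [Group Γ] [TopologicalSpace Γ]
    [DiscreteTopology Γ] : EtaleGroupoid Γ Unit where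
  r _ := ()
  s _ := ()
  unit _ := 1
  mul g h := g * h
  inv g := g⁻¹
  r_unit _ := rfl
  s_unit _ := rfl
  r_mul _ _ _ := rfl
  s_mul _ _ _ := rfl
  mul_assoc g h k _ _ := mul_assoc g h k
  unit_mul g := one_mul g
  mul_unit g := mul_one g
  r_inv _ := rfl
  s_inv _ := rfl
  mul_inv g := mul_inv_cancel g
  inv_mul g := inv_mul_cancel g
  etale_r := discrete_to_unit_isLocalHomeomorph _
  etale_s := discrete_to_unit_isLocalHomeomorph _
  continuous_mul := continuous_of_discreteTopology
  continuous_inv := continuous_of_discreteTopology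

namespace RightAction

variable {Γ : Type} [Group Γ] [TopologicalSpace Γ] [DiscreteTopology Γ]
  {X : Type} [TopologicalSpace X] (ρ : RightAction (groupGroupoid Γ) X)

theorem act_one (x : X) : ρ.act x 1 = x := ρ.act_unit x

theorem act_act (x : X) (g h : Γ) : ρ.act (ρ.act x g) h = ρ.act x (g * h) :=
  ρ.act_mul x g h rfl rfl

theorem IsFree.act_injective {ρ : RightAction (groupGroupoid Γ) X} (hρ : ρ.IsFree) (x : X) :
    Function.Injective (ρ.act x) := fun g g' hgg' =>
  congrArg (fun p => p.1.2)
    (hρ (a₁ := ⟨(x, g), rfl⟩) (a₂ := ⟨(x, g'), rfl⟩) (Prod.ext hgg' rfl))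

theorem orbitRel_equivalence_s19 : Equivalence ρ.OrbitRel where
  refl x := ⟨1, rfl, (ρ.act_one x).symm⟩
  symm := by
    rintro x _ ⟨g, -, rfl⟩
    exact ⟨g⁻¹, rfl, by rw [act_act, mul_inv_cancel, act_one]⟩
  trans := by
    rintro x _ _ ⟨g, -, rfl⟩ ⟨h, -, rfl⟩
    exact ⟨g * h, rfl, ρ.act_act x g h⟩

theorem orbitMap_act (x : X) (g : Γ) : ρ.orbitMap (ρ.act x g) = ρ.orbitMap x :=
  (Quot.sound ⟨g, rfl, rfl⟩).symm

theorem exists_act_eq_of_orbitMap_eq {x y : X} (h : ρ.orbitMap x = ρ.orbitMap y) :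
    ∃ g, ρ.act x g = y := by
  obtain ⟨g, -, hg⟩ := ρ.orbitRel_equivalence_s19.eqvGen_iff.mp (Quot.eq.mp h)
  exact ⟨g, hg.symm⟩

theorem orbitMap_out (a : ρ.OrbitSpace) : ρ.orbitMap (Quot.out a) = a := Quot.out_eq a

noncomputable def offset (x : X) : Γ :=
  (ρ.exists_act_eq_of_orbitMap_eq (ρ.orbitMap_out (ρ.orbitMap x))).choose

theorem act_out_offset (x : X) : ρ.act (Quot.out (ρ.orbitMap x)) (ρ.offset x) = x :=
  (ρ.exists_act_eq_of_orbitMap_eq (ρ.orbitMap_out (ρ.orbitMap x))).choose_spec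

variable {ρ}

theorem IsFree.offset_act (hρ : ρ.IsFree) (x : X) (g : Γ) :
    ρ.offset (ρ.act x g) = ρ.offset x * g := by
  apply hρ.act_injective (Quot.out (ρ.orbitMap x))
  have h := ρ.act_out_offset (ρ.act x g)
  rw [orbitMap_act] at h
  rw [h, ← act_act, act_out_offset]

theorem IsFree.offset_out (hρ : ρ.IsFree) (a : ρ.OrbitSpace) : ρ.offset (Quot.out a) = 1 := by
  apply hρ.act_injective (Quot.out a)
  have h := ρ.act_out_offset (Quot.out a)
  rw [orbitMap_out] at h
  rw [h, act_one]

noncomputable def IsFree.trivialization (hρ : ρ.IsFree) : X ≃ ρ.OrbitSpace × Γ where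
  toFun x := (ρ.orbitMap x, ρ.offset x)
  invFun p := ρ.act (Quot.out p.1) p.2
  left_inv := ρ.act_out_offset
  right_inv := by
    rintro ⟨a, g⟩
    simp only [orbitMap_act, orbitMap_out, hρ.offset_act, hρ.offset_out, one_mul]

theorem IsFree.trivialization_fst (hρ : ρ.IsFree) (x : X) :
    (hρ.trivialization x).1 = ρ.orbitMap x := rfl

theorem IsFree.trivialization_act (hρ : ρ.IsFree) (x : X) (g : Γ) :
    hρ.trivialization (ρ.act x g) =
      ((hρ.trivialization x).1, (hρ.trivialization x).2 * g) :=
  Prod.ext (ρ.orbitMap_act x g) (hρ.offset_act x g)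

end RightAction

namespace LeftAction

variable {Λ : Type} [Group Λ] [TopologicalSpace Λ] [DiscreteTopology Λ]
  {X : Type} [TopologicalSpace X] (l : LeftAction (groupGroupoid Λ) X)

theorem one_act (x : X) : l.act 1 x = x := l.unit_act x

theorem act_act (h₁ h₂ : Λ) (x : X) : l.act h₁ (l.act h₂ x) = l.act (h₁ * h₂) x :=
  l.mul_act h₁ h₂ x rfl rfl

variable {Γ B : Type} [Group Γ] (e : X ≃ B × Γ)

def baseAct (h : Λ) (b : B) : B := (e (l.act h (e.symm (b, 1)))).1

def cocycle (h : Λ) (b : B) : Γ := (e (l.act h (e.symm (b, 1)))).2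

theorem baseAct_one (b : B) : l.baseAct e 1 b = b := by
  simp only [baseAct, one_act, Equiv.apply_symm_apply]

section Equivariant

variable [TopologicalSpace Γ] [DiscreteTopology Γ] {l e} {ρ : RightAction (groupGroupoid Γ) X}
  (hcomm : ∀ h x g, l.act h (ρ.act x g) = ρ.act (l.act h x) g)
  (he : ∀ x g, e (ρ.act x g) = ((e x).1, (e x).2 * g))
include hcomm he

theorem apply_act_of_equivariant (h : Λ) (x : X) :
    e (l.act h x) = (l.baseAct e h (e x).1, l.cocycle e h (e x).1 * (e x).2) := by
  obtain ⟨b, g, rfl⟩ : ∃ b g, ρ.act (e.symm (b, 1)) g = x :=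
    ⟨(e x).1, (e x).2, e.injective (by rw [he, Equiv.apply_symm_apply, one_mul])⟩
  rw [hcomm, he, he, Equiv.apply_symm_apply, one_mul]
  rfl

theorem apply_mul_act_symm_of_equivariant (h₁ h₂ : Λ) (b : B) :
    e (l.act (h₁ * h₂) (e.symm (b, 1))) =
      (l.baseAct e h₁ (l.baseAct e h₂ b),
        l.cocycle e h₁ (l.baseAct e h₂ b) * l.cocycle e h₂ b) := by
  rw [← act_act, apply_act_of_equivariant hcomm he h₁]
  rfl

theorem baseAct_mul_of_equivariant (h₁ h₂ : Λ) (b : B) :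
    l.baseAct e (h₁ * h₂) b = l.baseAct e h₁ (l.baseAct e h₂ b) :=
  (congrArg Prod.fst (apply_mul_act_symm_of_equivariant hcomm he h₁ h₂ b) :)

theorem cocycle_mul_of_equivariant (h₁ h₂ : Λ) (b : B) :
    l.cocycle e (h₁ * h₂) b = l.cocycle e h₁ (l.baseAct e h₂ b) * l.cocycle e h₂ b :=
  (congrArg Prod.snd (apply_mul_act_symm_of_equivariant hcomm he h₁ h₂ b) :)

end Equivariant

end LeftAction

theorem Correspondence.left_act_right_act {Λ Γ : Type} [Group Λ] [TopologicalSpace Λ]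
    [DiscreteTopology Λ] [Group Γ] [TopologicalSpace Γ] [DiscreteTopology Γ]
    {X : Type} [TopologicalSpace X] (C : Correspondence (groupGroupoid Λ) (groupGroupoid Γ) X)
    (h : Λ) (x : X) (g : Γ) : C.left.act h (C.right.act x g) = C.right.act (C.left.act h x) g :=
  C.comm h x g rfl rfl

/-- Let `G` and `H` be discrete groups and `X : H ← G` a groupoid
correspondence.  Then `X` is discrete, and choosing a section of
`X → X/G =: A` yields a `G`-equivariant bijection `X ≅ A × G` whose first
component is the orbit map, under which the left `H`-action takes the form
`h·(a,g) = (π h a, φ h a * g)`, where `π` is an `H`-action on `A` and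
`φ : H × A → G` is a `1`-cocycle: `φ (h₁h₂) a = φ h₁ (π h₂ a) * φ h₂ a`. -/
theorem discrete_group_correspondence_structure
    {Γ Λ : Type} [Group Γ] [TopologicalSpace Γ] [DiscreteTopology Γ]
    [Group Λ] [TopologicalSpace Λ] [DiscreteTopology Λ]
    {X : Type} [TopologicalSpace X]
    (C : Correspondence (groupGroupoid Λ) (groupGroupoid Γ) X) :
    DiscreteTopology X ∧
    ∃ e : X ≃ C.right.OrbitSpace × Γ,
      (∀ x, (e x).1 = C.right.orbitMap x) ∧
      (∀ x g, e (C.right.act x g) = ((e x).1, (e x).2 * g)) ∧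
      ∃ (π : Λ → C.right.OrbitSpace → C.right.OrbitSpace)
        (φ : Λ → C.right.OrbitSpace → Γ),
        (∀ h x, e (C.left.act h x) = (π h (e x).1, φ h (e x).1 * (e x).2)) ∧
        (∀ a, π 1 a = a) ∧
        (∀ h₁ h₂ a, π (h₁ * h₂) a = π h₁ (π h₂ a)) ∧
        (∀ h₁ h₂ a, φ (h₁ * h₂) a = φ h₁ (π h₂ a) * φ h₂ a) := by
  set e := C.free.trivialization
  have he := C.free.trivialization_act
  have hcomm := C.left_act_right_act
  exact ⟨C.etale_s.comap_discreteTopology, e, C.free.trivialization_fst, he,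
    C.left.baseAct e, C.left.cocycle e,
    LeftAction.apply_act_of_equivariant hcomm he, C.left.baseAct_one e,
    LeftAction.baseAct_mul_of_equivariant hcomm he,
    LeftAction.cocycle_mul_of_equivariant hcomm he⟩

end Statement19
end
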